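/- Let ν and k be positive integers. Let (n_r, …, n_1) be a partition with parts ≤ νk and conjugate (r^{(1)}, …, r^{(νk)}), and let (n'_{r'}, …, n'_1) be a partition with parts ≤ k and conjugate (s^{(1)}, …, s^{(k)}). Then Σ_{p=1}^{r} Σ_{q=1}^{r'} min{ν n'_q, n_p} = Σ_{t=1}^{k} Σ_{p=0}^{ν−1} s^{(t)} r^{(νt − p)}. -/
import Mathlib


open Finset

lemma stmt10_key_iff (ν t p c : ℕ) (hp : p < ν) :
    t ≤ c ↔ ν * t - p ≤ ν * c := by
  constructor
  · intro h
    calc ν * t - p ≤ ν * t := Nat.sub_le _ _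
    _ ≤ ν * c := Nat.mul_le_mul_left _ h
  · intro h
    by_contra hc
    push_neg at hc
    have h1 : ν * (c + 1) ≤ ν * t := Nat.mul_le_mul_left _ hc
    have h2 : ν * (c + 1) = ν * c + ν := by ring
    omega

lemma stmt10_div_helper (ν a b : ℕ) (hν : 0 < ν) (h1 : ν * a ≤ b) (h2 : b < ν * a + ν) :
    b / ν = a := by
  apply Nat.div_eq_of_lt_le
  · rwa [Nat.mul_comm]
  · rw [Nat.succ_mul, Nat.mul_comm]
    omega

lemma stmt10_min_eq (N a b : ℕ) (ha : a ≤ N) (hb : b ≤ N) :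
    min a b = ∑ m ∈ Finset.Icc 1 N, if m ≤ a ∧ m ≤ b then 1 else 0 := by
  rw [← Finset.card_filter]
  have : (Finset.Icc 1 N).filter (fun m => m ≤ a ∧ m ≤ b) = Finset.Icc 1 (min a b) := by
    ext m
    simp only [Finset.mem_filter, Finset.mem_Icc, le_min_iff]
    omega
  rw [this, Nat.card_Icc]
  omega

/-- Let `ν, k > 0`. For a partition `n` with parts `≤ νk`, conjugate
`r^{(m)} = #{p : n_p ≥ m}` (1 ≤ m ≤ νk), and a partition `n'` with parts `≤ k`, conjugate
`s^{(t)} = #{q : n'_q ≥ t}`, one has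
`Σ_p Σ_q min(ν n'_q, n_p) = Σ_{t=1}^k Σ_{p=0}^{ν−1} s^{(t)} r^{(νt−p)}`. -/
theorem stmt10 (ν k : ℕ) (hν : 0 < ν) (hk0 : 0 < k) (r r' : ℕ)
    (n : Fin r → ℕ) (n' : Fin r' → ℕ)
    (hmono : ∀ p q : Fin r, p ≤ q → n q ≤ n p)
    (hmono' : ∀ p q : Fin r', p ≤ q → n' q ≤ n' p)
    (hbd : ∀ p : Fin r, n p ≤ ν * k) (hbd' : ∀ q : Fin r', n' q ≤ k) :
    ∑ p : Fin r, ∑ q : Fin r', min (ν * n' q) (n p) =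
      ∑ t ∈ Finset.Icc 1 k, ∑ p ∈ Finset.range ν,
        ((Finset.univ.filter fun q : Fin r' => t ≤ n' q).card) *
        ((Finset.univ.filter fun pp : Fin r => ν * t - p ≤ n pp).card) := by
  have hLHS : ∑ p : Fin r, ∑ q : Fin r', min (ν * n' q) (n p) =
      ∑ m ∈ Finset.Icc 1 (ν * k),
        ((Finset.univ.filter fun q : Fin r' => m ≤ ν * n' q).card) *
        ((Finset.univ.filter fun pp : Fin r => m ≤ n pp).card) := by
    have h1 : ∀ (p : Fin r) (q : Fin r'), min (ν * n' q) (n p) =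
        ∑ m ∈ Finset.Icc 1 (ν * k), if m ≤ ν * n' q ∧ m ≤ n p then 1 else 0 := by
      intro p q
      exact stmt10_min_eq (ν * k) _ _ (Nat.mul_le_mul_left _ (hbd' q)) (hbd p)
    simp_rw [h1]
    rw [Finset.sum_comm]
    have hswap : (∑ q : Fin r', ∑ p : Fin r, ∑ m ∈ Finset.Icc 1 (ν * k),
        if m ≤ ν * n' q ∧ m ≤ n p then 1 else 0) =
        ∑ m ∈ Finset.Icc 1 (ν * k), ∑ q : Fin r', ∑ p : Fin r,
        if m ≤ ν * n' q ∧ m ≤ n p then 1 else 0 :=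
      (Finset.sum_congr rfl fun q _ => Finset.sum_comm).trans Finset.sum_comm
    rw [hswap]
    refine Finset.sum_congr rfl fun m _ => ?_
    rw [Finset.card_filter, Finset.card_filter, Finset.sum_mul_sum]
    refine Finset.sum_congr rfl fun q _ => Finset.sum_congr rfl fun p _ => ?_
    by_cases h1 : m ≤ ν * n' q <;> by_cases h2 : m ≤ n p <;> simp [h1, h2]
  rw [hLHS, ← Finset.sum_product']
  refine (Finset.sum_nbij' (fun m => ((m + ν - 1) / ν, ν * ((m + ν - 1) / ν) - m))
    (fun tp => ν * tp.1 - tp.2) ?_ ?_ ?_ ?_ ?_)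
  · intro m hm
    simp only [Finset.mem_Icc] at hm
    have hd := Nat.div_add_mod (m + ν - 1) ν
    have hmod := Nat.mod_lt (m + ν - 1) hν
    simp only [Finset.mem_product, Finset.mem_Icc, Finset.mem_range]
    have ht1 : 1 ≤ (m + ν - 1) / ν := by
      rcases Nat.eq_zero_or_pos ((m + ν - 1) / ν) with h | h
      · exfalso; rw [h, Nat.mul_zero] at hd; omega
      · exact h
    have htk : (m + ν - 1) / ν ≤ k := by
      by_contra hc
      push_neg at hc
      have h3 : ν * (k + 1) ≤ ν * ((m + ν - 1) / ν) := Nat.mul_le_mul_left _ hc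
      have h2 : ν * (k + 1) = ν * k + ν := by ring
      omega
    exact ⟨⟨ht1, htk⟩, by omega⟩
  · intro tp htp
    simp only [Finset.mem_product, Finset.mem_Icc, Finset.mem_range] at htp
    obtain ⟨⟨ht1, htk⟩, hp⟩ := htp
    simp only [Finset.mem_Icc]
    have h1 : ν * 1 ≤ ν * tp.1 := Nat.mul_le_mul_left _ ht1
    have h2 : ν * tp.1 ≤ ν * k := Nat.mul_le_mul_left _ htk
    omega
  · intro m hm
    simp only [Finset.mem_Icc] at hm
    have hd := Nat.div_add_mod (m + ν - 1) ν
    have hmod := Nat.mod_lt (m + ν - 1) hν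
    show ν * ((m + ν - 1) / ν) - (ν * ((m + ν - 1) / ν) - m) = m
    omega
  · rintro ⟨t, p⟩ htp
    simp only [Finset.mem_product, Finset.mem_Icc, Finset.mem_range] at htp
    obtain ⟨⟨ht1, htk⟩, hp⟩ := htp
    have hνt : ν * 1 ≤ ν * t := Nat.mul_le_mul_left _ ht1
    have hdiv : (ν * t - p + ν - 1) / ν = t :=
      stmt10_div_helper ν t _ hν (by omega) (by omega)
    show ((ν * t - p + ν - 1) / ν, ν * ((ν * t - p + ν - 1) / ν) - (ν * t - p)) = (t, p)
    rw [hdiv]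
    simp only [Prod.mk.injEq]
    exact ⟨trivial, by omega⟩
  · intro m hm
    simp only [Finset.mem_Icc] at hm
    have hd := Nat.div_add_mod (m + ν - 1) ν
    have hmod := Nat.mod_lt (m + ν - 1) hν
    have ht1 : 1 ≤ (m + ν - 1) / ν := by
      rcases Nat.eq_zero_or_pos ((m + ν - 1) / ν) with h | h
      · exfalso; rw [h, Nat.mul_zero] at hd; omega
      · exact h
    have hp : ν * ((m + ν - 1) / ν) - m < ν := by omega
    have hmm : ν * ((m + ν - 1) / ν) - (ν * ((m + ν - 1) / ν) - m) = m := by omega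
    show _ = ((Finset.univ.filter fun q : Fin r' => (m + ν - 1) / ν ≤ n' q).card) *
        ((Finset.univ.filter fun pp : Fin r =>
          ν * ((m + ν - 1) / ν) - (ν * ((m + ν - 1) / ν) - m) ≤ n pp).card)
    rw [hmm]
    have hfe : (Finset.univ.filter fun q : Fin r' => m ≤ ν * n' q) =
        (Finset.univ.filter fun q : Fin r' => (m + ν - 1) / ν ≤ n' q) := by
      apply Finset.filter_congr
      intro q _
      have := stmt10_key_iff ν ((m + ν - 1) / ν) (ν * ((m + ν - 1) / ν) - m) (n' q) hp
      rw [hmm] at this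
      exact this.symm
    rw [hfe]
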